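/- For any edge e between vertices a and b in a finite connected multigraph G, the effective resistance R_{ab} equals the probability that e is contained in a uniformly random spanning tree of G; equivalently, R_{ab} = (number of spanning trees of G containing e) / (number of spanning trees of G). -/

import Mathlib

/-- Net current out of vertex `c` for a current assignment `i` on oriented edges. -/
def netFlow {V E : Type} [Fintype E] [DecidableEq V] (s t : E → V) (i : E → ℝ) (c : V) : ℝ :=
  (∑ e : E, if s e = c then i e else 0) - (∑ e : E, if t e = c then i e else 0)

/-- `(v, i)` is the electrical flow of one unit of current from `a` to `b` in the
multigraph `(s, t)` with unit resistance on every edge; the effective resistance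
`R_{ab}` is then `v a − v b`. -/
def IsUnitFlow {V E : Type} [Fintype E] [DecidableEq V] (s t : E → V) (a b : V)
    (v : V → ℝ) (i : E → ℝ) : Prop :=
  (∀ c : V, netFlow s t i c = (if c = a then 1 else 0) - (if c = b then 1 else 0)) ∧
  (∀ e : E, v (s e) - v (t e) = i e)

/-- Adjacency using only edges in `T`. -/
def MAdjOn {V E : Type} (s t : E → V) (T : Finset E) (x y : V) : Prop :=
  ∃ e ∈ T, (s e = x ∧ t e = y) ∨ (s e = y ∧ t e = x)

/-- Connectivity of a multigraph. -/
def MConnected {V E : Type} [Fintype E] (s t : E → V) : Prop :=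
  Nonempty V ∧ ∀ x y : V, Relation.ReflTransGen (MAdjOn s t Finset.univ) x y

/-- `T` is (the edge set of) a spanning tree of the multigraph `(s, t)`:
it connects all vertices and has exactly `|V| − 1` edges. -/
def IsSpanningTree {V E : Type} [Fintype V] (s t : E → V) (T : Finset E) : Prop :=
  (∀ x y : V, Relation.ReflTransGen (MAdjOn s t T) x y) ∧ T.card + 1 = Fintype.card V

/-!
Ground the network at `b`: deleting the column of `b` from the incidence matrix gives a matrix
`X` with `Xᵀ X (v - v b) = eₐ` for the unit flow, so Cramer's rule gives
`(v a - v b) · det (Xᵀ X) = det (Yᵀ Y)`, where `Y` is `X` with the column of `a` deleted too.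
Both are Gram determinants. By Cauchy–Binet each is the sum of the squares of the maximal
minors, and since incidence matrices are totally unimodular every such square is `0` or `1`.
A maximal minor of `X` is nonzero exactly when its rows are the edges of a spanning tree, and
one of `Y` exactly when its rows together with `e₀` form a spanning tree (the row of `e₀` in `X`
spans the kernel of the restriction to `Y`). So `det (Xᵀ X)` counts spanning trees and
`det (Yᵀ Y)` counts those containing `e₀`. If `e₀` is a loop, both sides vanish.
-/

open Matrix Finset

namespace Matrix

variable {R n : Type*} [CommRing R] [Fintype n] [DecidableEq n]

theorem det_updateRow_single_self (A : Matrix n n R) (i : n) :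
    (A.updateRow i (Pi.single i 1)).det =
      (A.submatrix (Subtype.val : {j // j ≠ i} → n) Subtype.val).det := by
  have : Subsingleton {j // ¬j ≠ i} :=
    ⟨fun j k => Subtype.ext ((not_not.1 j.2).trans (not_not.1 k.2).symm)⟩
  rw [twoBlockTriangular_det _ (· ≠ i) fun k hk j hj => by
      simp [not_not.1 hk, Pi.single_eq_of_ne hj],
    mul_comm, det_eq_elem_of_subsingleton _ ⟨i, not_not.2 rfl⟩]
  simp only [toSquareBlockProp, toBlock_apply, updateRow_self, Pi.single_eq_same, one_mul]
  congr 1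
  ext j k
  simp [updateRow_ne j.2]

theorem det_mul_apply_of_mulVec_eq_single {A : Matrix n n R} {x : n → R} {i : n}
    (h : A *ᵥ x = Pi.single i 1) :
    A.det * x i = (A.submatrix (Subtype.val : {j // j ≠ i} → n) Subtype.val).det := by
  have := congr_fun (congrArg (A.adjugate *ᵥ ·) h) i
  simp only [mulVec_mulVec, adjugate_mul, smul_mulVec, one_mulVec, mulVec_single_one] at this
  rw [← det_updateRow_single_self, ← adjugate_apply]
  simpa using this

theorem det_mem_range_signType_of_row_single {k : ℕ} (M : Matrix (Fin (k + 1)) (Fin (k + 1)) R)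
    {i j : Fin (k + 1)} (hrow : ∀ j' ≠ j, M i j' = 0) (hij : M i j ∈ Set.range SignType.cast)
    (hminor : (M.submatrix i.succAbove j.succAbove).det ∈ Set.range SignType.cast) :
    M.det ∈ Set.range SignType.cast := by
  rw [det_succ_row M i,
    Fintype.sum_eq_single j fun j' hj' => by rw [hrow j' hj', mul_zero, zero_mul]]
  change _ ∈ MonoidHom.mrange SignType.castHom.toMonoidHom
  exact mul_mem (mul_mem (pow_mem (MonoidHom.mem_mrange.2 ⟨-1, by simp⟩) _) hij) hminor

end Matrix

section CauchyBinet

variable {R E W : Type*} [CommRing R] [Fintype W] [DecidableEq W]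

theorem sum_perm_prod_mul_det_submatrix_eq_sq (X : Matrix E W R) (q : W → E) :
    ∑ σ : Equiv.Perm W, (∏ w, X (q (σ w)) w) * (X.submatrix (fun w => q (σ w)) id).det =
      (X.submatrix q id).det ^ 2 := by
  have h (σ : Equiv.Perm W) :
      (X.submatrix (fun w => q (σ w)) id).det = σ.sign * (X.submatrix q id).det :=
    det_permute σ (X.submatrix q id)
  simp only [h, ← mul_assoc, ← sum_mul, sq]
  congr 1
  rw [det_apply']
  exact sum_congr rfl fun σ _ => by simp [mul_comm]

variable [Fintype E]

theorem det_transpose_mul_self_eq_sum (X : Matrix E W R) :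
    (Xᵀ * X).det = ∑ p : W → E, (∏ w, X (p w) w) * (X.submatrix p id).det := by
  have hrows : Xᵀ * X = of fun w => ∑ e, X e w • X e := by
    ext w w'
    simp [mul_apply, Finset.sum_apply]
  rw [hrows]
  exact (detRowAlternating.toMultilinearMap.map_sum fun w e => X e w • X e).trans
    (sum_congr rfl fun p _ => MultilinearMap.map_smul_univ _ _ _)

variable [DecidableEq E]

noncomputable def enumOfCardEq (T : {T : Finset E // #T = Fintype.card W}) : W ≃ T.1 :=
  Fintype.equivOfCardEq (by rw [Fintype.card_coe, T.2])

theorem sum_eq_sum_sum_perm_enumOfCardEq {M : Type*} [AddCommMonoid M] (F : (W → E) → M)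
    (hF : ∀ p, ¬Function.Injective p → F p = 0) :
    ∑ p, F p = ∑ T : {T : Finset E // #T = Fintype.card W}, ∑ σ : Equiv.Perm W,
      F (fun w => enumOfCardEq T (σ w)) := by
  rw [← sum_filter_of_ne fun p _ hp => by_contra fun h => hp (hF p h),
    ← Fintype.sum_sigma (fun x : (_ : {T : Finset E // #T = Fintype.card W}) × Equiv.Perm W =>
      F fun w => enumOfCardEq x.1 (x.2 w))]
  have himage (x : (_ : {T : Finset E // #T = Fintype.card W}) × Equiv.Perm W) :
      univ.image (fun w => (enumOfCardEq x.1 (x.2 w) : E)) = x.1 := by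
    ext e
    simp only [mem_image, mem_univ, true_and]
    exact ⟨fun ⟨w, hw⟩ => hw ▸ (enumOfCardEq x.1 (x.2 w)).2,
      fun he => ⟨x.2.symm ((enumOfCardEq x.1).symm ⟨e, he⟩), by simp⟩⟩
  symm
  refine sum_bij (fun x _ w => enumOfCardEq x.1 (x.2 w)) (fun x _ => ?_) (fun x _ y _ h => ?_)
    (fun p hp => ?_) fun _ _ => rfl
  · exact mem_filter.2 ⟨mem_univ _,
      (Subtype.val_injective.comp (enumOfCardEq x.1).injective).comp x.2.injective⟩
  · obtain ⟨T, σ⟩ := x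
    obtain ⟨T', σ'⟩ := y
    obtain rfl : T = T' := Subtype.ext ((himage ⟨T, σ⟩).symm.trans (h ▸ himage ⟨T', σ'⟩))
    congr
    ext w
    exact (enumOfCardEq T).injective (Subtype.ext (congrFun h w))
  · have hp : Function.Injective p := (mem_filter.1 hp).2
    let T : {T : Finset E // #T = Fintype.card W} :=
      ⟨univ.image p, by rw [card_image_of_injective _ hp, card_univ]⟩
    have hmem (w : W) : p w ∈ T.1 := mem_image_of_mem p (mem_univ w)
    let σ : Equiv.Perm W := Equiv.ofBijective (fun w => (enumOfCardEq T).symm ⟨p w, hmem w⟩)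
      (Finite.injective_iff_bijective.1 fun w w' h => hp (by simpa using h))
    exact ⟨⟨T, σ⟩, mem_univ _, funext fun w => by simp [σ]⟩

theorem det_transpose_mul_self_eq_sum_sq (X : Matrix E W R) :
    (Xᵀ * X).det = ∑ T : {T : Finset E // #T = Fintype.card W},
      (X.submatrix (fun w => enumOfCardEq T w) id).det ^ 2 := by
  rw [det_transpose_mul_self_eq_sum,
    sum_eq_sum_sum_perm_enumOfCardEq (fun p => (∏ w, X (p w) w) * (X.submatrix p id).det)]
  · exact sum_congr rfl fun T _ =>
      sum_perm_prod_mul_det_submatrix_eq_sq X fun w => enumOfCardEq T w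
  · intro p hp
    obtain ⟨w, w', hpw, hne⟩ := Function.not_injective_iff.1 hp
    rw [det_zero_of_row_eq hne (congrArg X hpw), mul_zero]

theorem Matrix.IsTotallyUnimodular.det_transpose_mul_self_eq_card {K : Type*} [Field K]
    {X : Matrix E W K} (hX : X.IsTotallyUnimodular) :
    (Xᵀ * X).det =
      Nat.card {T : Finset E // #T = Fintype.card W ∧ LinearIndepOn K X.row ↑T} := by
  classical
  have hterm (T : {T : Finset E // #T = Fintype.card W}) :
      (X.submatrix (fun w => enumOfCardEq T w) id).det ^ 2 =
        if LinearIndepOn K X.row ↑T.1 then 1 else 0 := by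
    have hdet : (X.submatrix (fun w => enumOfCardEq T w) id).det ≠ 0 ↔
        LinearIndepOn K X.row ↑T.1 := by
      rw [LinearIndepOn, ← linearIndependent_equiv (enumOfCardEq T), ← isUnit_iff_ne_zero,
        ← isUnit_iff_isUnit_det, ← linearIndependent_rows_iff_isUnit]
      rfl
    obtain ⟨s, hs⟩ :=
      (isTotallyUnimodular_iff_fintype X).1 hX W (fun w => enumOfCardEq T w) id
    rw [← hdet, ← hs]
    rcases s with _ | _ | _ <;> simp
  rw [det_transpose_mul_self_eq_sum_sq, sum_congr rfl fun T _ => hterm T, sum_boole,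
    Nat.card_congr (Equiv.subtypeSubtypeEquivSubtypeInter _ _).symm, Nat.card_eq_fintype_card,
    Fintype.card_subtype]

end CauchyBinet

theorem Submodule.span_insert_eq_comap_span_image {R M N : Type*} [Ring R] [AddCommGroup M]
    [AddCommGroup N] [Module R M] [Module R N] (f : M →ₗ[R] N) {u : M}
    (hu : LinearMap.ker f = R ∙ u) (s : Set M) :
    span R (insert u s) = (span R (f '' s)).comap f := by
  rw [← Submodule.map_span, Submodule.comap_map_eq, hu, span_insert, sup_comm]

theorem Submodule.span_insert_eq_top_iff {R M N : Type*} [Ring R] [AddCommGroup M]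
    [AddCommGroup N] [Module R M] [Module R N] {f : M →ₗ[R] N} (hf : Function.Surjective f)
    {u : M} (hu : LinearMap.ker f = R ∙ u) (s : Set M) :
    span R (insert u s) = ⊤ ↔ span R (f '' s) = ⊤ := by
  rw [span_insert_eq_comap_span_image f hu]
  refine ⟨fun h => ?_, fun h => by rw [h, comap_top]⟩
  rw [← map_comap_eq_of_surjective hf (span R (f '' s)), h, map_top, LinearMap.range_eq_top.2 hf]

theorem LinearMap.ker_funLeft_subtype_ne {R n : Type*} [Semiring R] [DecidableEq n] (i : n) :
    LinearMap.ker (funLeft R R (Subtype.val : {j // j ≠ i} → n)) = R ∙ Pi.single i 1 := by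
  ext u
  rw [mem_ker, Submodule.mem_span_singleton]
  constructor
  · intro h
    refine ⟨u i, funext fun j => ?_⟩
    by_cases hj : j = i
    · subst hj; simp
    · simpa [Pi.single_eq_of_ne hj] using (congrFun h ⟨j, hj⟩).symm
  · rintro ⟨a, rfl⟩
    ext j
    simp [Pi.single_eq_of_ne j.2]

theorem Fintype.card_subtype_ne_add_one {α : Type*} [Fintype α] [DecidableEq α] (b : α) :
    Fintype.card {c // c ≠ b} + 1 = Fintype.card α := by
  rw [Fintype.card_subtype, Finset.filter_ne', Finset.card_erase_add_one (Finset.mem_univ b),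
    Finset.card_univ]

theorem linearIndepOn_iff_span_image_eq_top {K E W : Type*} [DivisionRing K] [Fintype W]
    {v : E → W → K} {T : Finset E} (h : #T = Fintype.card W) :
    LinearIndepOn K v ↑T ↔ Submodule.span K (v '' ↑T) = ⊤ := by
  have hcard : Fintype.card (↑T : Set E) = Module.finrank K (W → K) := by simp [h]
  rw [LinearIndepOn, linearIndependent_iff_card_eq_finrank_span, Set.image_eq_range, Set.finrank,
    hcard]
  exact ⟨fun h' => Submodule.eq_top_of_finrank_eq h'.symm, fun h' => by rw [h', finrank_top]⟩

section Incidence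

variable {V E : Type} [DecidableEq V] (s t : E → V)

def incidenceMatrix : Matrix E V ℝ :=
  of fun e c => (if s e = c then 1 else 0) - (if t e = c then 1 else 0)

/-- Its Gram matrix is the reduced Laplacian of the network grounded at `b`. -/
def groundedIncidence (b : V) : Matrix E {c // c ≠ b} ℝ :=
  (incidenceMatrix s t).submatrix id Subtype.val

theorem incidenceMatrix_apply_mem_range (e : E) (c : V) :
    incidenceMatrix s t e c ∈ Set.range SignType.cast := by
  simp only [incidenceMatrix, of_apply]
  split_ifs
  exacts [⟨0, by simp⟩, ⟨1, by simp⟩, ⟨-1, by simp⟩, ⟨0, by simp⟩]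

theorem isTotallyUnimodular_incidenceMatrix :
    (incidenceMatrix s t).IsTotallyUnimodular := by
  intro k f g hf hg
  induction k with
  | zero => exact ⟨1, by simp⟩
  | succ k ih =>
    by_cases hrows : ∀ i, (∃ j, g j = s (f i)) ∧ ∃ j, g j = t (f i)
    · -- every row contains both a `1` and a `-1`, so all row sums vanish
      refine ⟨0, (exists_mulVec_eq_zero_iff.1 ⟨1, one_ne_zero, funext fun i => ?_⟩).symm⟩
      obtain ⟨⟨j, hj⟩, ⟨j', hj'⟩⟩ := hrows i
      simp [mulVec, dotProduct, incidenceMatrix, ← hj, ← hj', hg.eq_iff, sum_sub_distrib]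
    · -- some row has an endpoint outside the chosen columns, so expand along that row
      push Not at hrows
      obtain ⟨i, hi⟩ := hrows
      have hsingle : ∃ j₀, ∀ j ≠ j₀, incidenceMatrix s t (f i) (g j) = 0 := by
        by_cases hs : ∃ j, g j = s (f i)
        · obtain ⟨j₀, hj₀⟩ := hs
          refine ⟨j₀, fun j hj => ?_⟩
          simp [incidenceMatrix, ← hj₀, hg.eq_iff, hj.symm, Ne.symm (hi ⟨j₀, hj₀⟩ j)]
        · by_cases ht : ∃ j, g j = t (f i)
          · obtain ⟨j₀, hj₀⟩ := ht
            refine ⟨j₀, fun j hj => ?_⟩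
            push Not at hs
            simp [incidenceMatrix, ← hj₀, hg.eq_iff, hj.symm, (hs j).symm]
          · push Not at hs ht
            exact ⟨i, fun j _ => by simp [incidenceMatrix, (hs j).symm, (ht j).symm]⟩
      obtain ⟨j₀, hj₀⟩ := hsingle
      exact det_mem_range_signType_of_row_single _ hj₀ (incidenceMatrix_apply_mem_range ..)
        (ih _ _ (hf.comp Fin.succAbove_right_injective) (hg.comp Fin.succAbove_right_injective))

theorem isTotallyUnimodular_groundedIncidence (b : V) :
    (groundedIncidence s t b).IsTotallyUnimodular :=
  (isTotallyUnimodular_incidenceMatrix s t).submatrix _ _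

theorem incidenceMatrix_transpose_mulVec [Fintype E] (i : E → ℝ) :
    (incidenceMatrix s t)ᵀ *ᵥ i = netFlow s t i := by
  ext c
  simp [netFlow, incidenceMatrix, mulVec, dotProduct, sub_mul, sum_sub_distrib, ite_mul]

theorem groundedIncidence_mulVec [Fintype V] (b : V) (g : V → ℝ) :
    groundedIncidence s t b *ᵥ (fun w => g w - g b) = fun e => g (s e) - g (t e) := by
  ext e
  change ∑ w : {c // c ≠ b}, incidenceMatrix s t e w * (g w - g b) = _
  rw [← sum_subtype (univ.erase b) (by simp)
    (fun c => incidenceMatrix s t e c * (g c - g b)), sum_erase _ (by simp)]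
  simp [incidenceMatrix, sub_mul, sum_sub_distrib, ite_mul]

end Incidence

section Connectivity

variable {V E : Type} [Fintype V] [DecidableEq V] (s t : E → V)

theorem reflTransGen_of_span_groundedIncidence_eq_top {T : Finset E} {b : V}
    (hS : Submodule.span ℝ ((groundedIncidence s t b).row '' ↑T) = ⊤) (x y : V) :
    Relation.ReflTransGen (MAdjOn s t T) x y := by
  classical
  by_contra hxy
  -- the indicator of the component of `x` is a potential with zero gradient on `T`
  let χ : V → ℝ := fun c => if Relation.ReflTransGen (MAdjOn s t T) x c then 1 else 0
  let u : {c // c ≠ b} → ℝ := fun w => χ w - χ b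
  have hrow (e : E) (he : e ∈ T) : u ⬝ᵥ groundedIncidence s t b e = 0 := by
    have hst : Relation.ReflTransGen (MAdjOn s t T) x (s e) ↔
        Relation.ReflTransGen (MAdjOn s t T) x (t e) :=
      ⟨fun h => h.tail ⟨e, he, .inl ⟨rfl, rfl⟩⟩, fun h => h.tail ⟨e, he, .inr ⟨rfl, rfl⟩⟩⟩
    rw [dotProduct_comm, ← mulVec, groundedIncidence_mulVec, sub_eq_zero]
    simp only [χ, hst]
  have hker : Submodule.span ℝ ((groundedIncidence s t b).row '' ↑T) ≤
      LinearMap.ker (dotProductEquiv ℝ _ u) := by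
    rw [Submodule.span_le]
    rintro _ ⟨e, he, rfl⟩
    exact hrow e he
  have hu : u = 0 := dotProduct_self_eq_zero.1 (hker (hS ▸ Submodule.mem_top))
  have hχ (c : V) : χ c = χ b := by
    by_cases hc : c = b
    · rw [hc]
    · exact sub_eq_zero.1 (congrFun hu ⟨c, hc⟩)
  have := (hχ x).trans (hχ y).symm
  simp [χ, hxy, Relation.ReflTransGen.refl] at this

theorem span_groundedIncidence_eq_top_of_reflTransGen {T : Finset E} (b : V)
    (hconn : ∀ x y, Relation.ReflTransGen (MAdjOn s t T) x y) :
    Submodule.span ℝ ((groundedIncidence s t b).row '' ↑T) = ⊤ := by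
  set S := Submodule.span ℝ ((groundedIncidence s t b).row '' ↑T)
  let ρ : V → {c // c ≠ b} → ℝ := fun x w => if x = w then 1 else 0
  have hpath (x y : V) (h : Relation.ReflTransGen (MAdjOn s t T) x y) : ρ x - ρ y ∈ S := by
    induction h with
    | refl => simp
    | tail _ hyz ih =>
      obtain ⟨e, he, hst⟩ := hyz
      have hmem : ρ (s e) - ρ (t e) ∈ S := Submodule.subset_span ⟨e, he, rfl⟩
      rw [← sub_add_sub_cancel _ (ρ _)]
      refine S.add_mem ih ?_
      rcases hst with ⟨rfl, rfl⟩ | ⟨rfl, rfl⟩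
      · exact hmem
      · rw [← neg_sub]
        exact S.neg_mem hmem
  rw [eq_top_iff, ← (Pi.basisFun ℝ {c // c ≠ b}).span_eq, Submodule.span_le]
  rintro _ ⟨w, rfl⟩
  have hb : ρ b = 0 := funext fun w => if_neg (Ne.symm w.2)
  have hw : Pi.basisFun ℝ _ w = ρ w - ρ b := by
    ext w'
    simp [hb, ρ, Pi.single_apply, Subtype.ext_iff, eq_comm]
  rw [SetLike.mem_coe, hw]
  exact hpath w b (hconn w b)

theorem span_groundedIncidence_eq_top_iff (T : Finset E) (b : V) :
    Submodule.span ℝ ((groundedIncidence s t b).row '' ↑T) = ⊤ ↔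
      ∀ x y, Relation.ReflTransGen (MAdjOn s t T) x y :=
  ⟨reflTransGen_of_span_groundedIncidence_eq_top s t,
    span_groundedIncidence_eq_top_of_reflTransGen s t b⟩

end Connectivity

section SpanningTrees

variable {V E : Type} [Fintype V] [DecidableEq V] (s t : E → V)

theorem isSpanningTree_iff_linearIndepOn (b : V) (T : Finset E) :
    IsSpanningTree s t T ↔
      #T = Fintype.card {c // c ≠ b} ∧ LinearIndepOn ℝ (groundedIncidence s t b).row ↑T := by
  rw [IsSpanningTree, ← span_groundedIncidence_eq_top_iff, ← Fintype.card_subtype_ne_add_one b,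
    Nat.add_right_cancel_iff, and_comm]
  exact and_congr_right fun h => (linearIndepOn_iff_span_image_eq_top h).symm

theorem exists_isSpanningTree [Fintype E] (hconn : MConnected s t) :
    ∃ T, IsSpanningTree s t T := by
  obtain ⟨⟨b⟩, hreach⟩ := hconn
  obtain ⟨B, -, -, hspan, hli⟩ := exists_linearIndepOn_extension (K := ℝ)
    (v := (groundedIncidence s t b).row) (linearIndepOn_empty _ _) (Set.empty_subset Set.univ)
  have hB : Submodule.span ℝ ((groundedIncidence s t b).row '' B) = ⊤ := by
    rw [eq_top_iff, ← (span_groundedIncidence_eq_top_iff s t univ b).2 (by simpa using hreach)]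
    exact Submodule.span_le.2 (by simpa using hspan)
  set T := (Set.toFinite B).toFinset
  have hT : (↑T : Set E) = B := Set.Finite.coe_toFinset _
  rw [← hT] at hli hB
  refine ⟨T, (isSpanningTree_iff_linearIndepOn s t b T).2 ⟨?_, hli⟩⟩
  have hcard := linearIndependent_iff_card_eq_finrank_span.1 hli
  rw [Set.finrank, ← Set.image_eq_range, hB, finrank_top, Module.finrank_fintype_fun_eq_card]
    at hcard
  simpa using hcard

theorem notMem_of_isSpanningTree_of_loop {T : Finset E} (hT : IsSpanningTree s t T) {e : E}
    (he : s e = t e) : e ∉ T := fun heT =>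
  ((isSpanningTree_iff_linearIndepOn s t (s e) T).1 hT).2.ne_zero heT
    (funext fun w => by simp [groundedIncidence, incidenceMatrix, he])

end SpanningTrees

section EdgeCount

variable {V E : Type} [DecidableEq V] (s t : E → V) {a b : V}

def groundedIncidence₂ (hab : a ≠ b) : Matrix E {w : {c // c ≠ b} // w ≠ ⟨a, hab⟩} ℝ :=
  (groundedIncidence s t b).submatrix id Subtype.val

variable {s t} (hab : a ≠ b) {e₀ : E}

theorem span_singleton_groundedIncidence_row
    (he₀ : (s e₀ = a ∧ t e₀ = b) ∨ (s e₀ = b ∧ t e₀ = a)) :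
    ℝ ∙ (groundedIncidence s t b).row e₀ = ℝ ∙ Pi.single ⟨a, hab⟩ 1 := by
  rcases he₀ with ⟨hs, ht⟩ | ⟨hs, ht⟩
  · congr 2
    ext w
    simp [groundedIncidence, incidenceMatrix, hs, ht, Pi.single_apply, Subtype.ext_iff, eq_comm,
      Ne.symm w.2]
  · rw [← Submodule.span_neg, Set.neg_singleton]
    congr 2
    ext w
    simp [groundedIncidence, incidenceMatrix, hs, ht, Pi.single_apply, Subtype.ext_iff, eq_comm,
      Ne.symm w.2]

theorem groundedIncidence₂_row_eq_zero
    (he₀ : (s e₀ = a ∧ t e₀ = b) ∨ (s e₀ = b ∧ t e₀ = a)) :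
    (groundedIncidence₂ s t hab).row e₀ = 0 := by
  ext w
  have hwa : (w : V) ≠ a := fun h => w.2 (Subtype.ext h)
  have hwb : (w : V) ≠ b := (w : {c // c ≠ b}).2
  rcases he₀ with ⟨hs, ht⟩ | ⟨hs, ht⟩ <;>
    simp [groundedIncidence₂, groundedIncidence, incidenceMatrix, hs, ht, Ne.symm hwa,
      Ne.symm hwb]

theorem isSpanningTree_insert_iff [Fintype V] [DecidableEq E]
    (he₀ : (s e₀ = a ∧ t e₀ = b) ∨ (s e₀ = b ∧ t e₀ = a))
    {F : Finset E} (hF : e₀ ∉ F) :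
    IsSpanningTree s t (insert e₀ F) ↔
      #F = Fintype.card {w : {c // c ≠ b} // w ≠ ⟨a, hab⟩} ∧
        LinearIndepOn ℝ (groundedIncidence₂ s t hab).row ↑F := by
  have hcard := Fintype.card_subtype_ne_add_one (⟨a, hab⟩ : {c // c ≠ b})
  rw [isSpanningTree_iff_linearIndepOn s t b, card_insert_of_notMem hF, ← hcard,
    Nat.add_right_cancel_iff]
  refine and_congr_right fun h => ?_
  rw [linearIndepOn_iff_span_image_eq_top (by rw [card_insert_of_notMem hF, h, hcard]),
    linearIndepOn_iff_span_image_eq_top h, coe_insert, Set.image_insert_eq,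
    Submodule.span_insert_eq_top_iff
      (LinearMap.funLeft_surjective_of_injective _ _ _ Subtype.val_injective)
      (by rw [LinearMap.ker_funLeft_subtype_ne, span_singleton_groundedIncidence_row hab he₀]),
    Set.image_image]
  rfl

end EdgeCount

section Counting

variable {V E : Type} [Fintype V] [Fintype E] [DecidableEq V] [DecidableEq E] (s t : E → V)

theorem card_isSpanningTree_eq_det (b : V) :
    (Nat.card {T // IsSpanningTree s t T} : ℝ) =
      ((groundedIncidence s t b)ᵀ * groundedIncidence s t b).det := by
  rw [(isTotallyUnimodular_groundedIncidence s t b).det_transpose_mul_self_eq_card,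
    Nat.card_congr (Equiv.subtypeEquivRight (isSpanningTree_iff_linearIndepOn s t b))]

theorem card_isSpanningTree_mem_eq_det {a b : V} (hab : a ≠ b) {e₀ : E}
    (he₀ : (s e₀ = a ∧ t e₀ = b) ∨ (s e₀ = b ∧ t e₀ = a)) :
    (Nat.card {T // IsSpanningTree s t T ∧ e₀ ∈ T} : ℝ) =
      ((groundedIncidence₂ s t hab)ᵀ * groundedIncidence₂ s t hab).det := by
  have hnotMem (F : {F : Finset E // #F = Fintype.card {w : {c // c ≠ b} // w ≠ ⟨a, hab⟩} ∧
      LinearIndepOn ℝ (groundedIncidence₂ s t hab).row ↑F}) : e₀ ∉ F.1 := fun h =>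
    F.2.2.ne_zero h (groundedIncidence₂_row_eq_zero hab he₀)
  have hTU : (groundedIncidence₂ s t hab).IsTotallyUnimodular :=
    (isTotallyUnimodular_groundedIncidence s t b).submatrix _ _
  rw [hTU.det_transpose_mul_self_eq_card]
  norm_cast
  exact Nat.card_congr
    { toFun T := ⟨T.1.erase e₀, (isSpanningTree_insert_iff hab he₀ (notMem_erase e₀ T.1)).1
        (by rw [insert_erase T.2.2]; exact T.2.1)⟩
      invFun F := ⟨insert e₀ F.1, (isSpanningTree_insert_iff hab he₀ (hnotMem F)).2 F.2,
        mem_insert_self _ _⟩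
      left_inv T := Subtype.ext (insert_erase T.2.2)
      right_inv F := Subtype.ext (erase_insert (hnotMem F)) }

end Counting

theorem IsUnitFlow.groundedLaplacian_mulVec {V E : Type} [Fintype V] [Fintype E]
    [DecidableEq V] {s t : E → V} {a b : V} {v : V → ℝ} {i : E → ℝ} (hflow : IsUnitFlow s t a b v i)
    (hab : a ≠ b) :
    ((groundedIncidence s t b)ᵀ * groundedIncidence s t b) *ᵥ (fun w => v w - v b) =
      Pi.single ⟨a, hab⟩ 1 := by
  rw [← mulVec_mulVec, groundedIncidence_mulVec, funext hflow.2]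
  ext w
  have := congrFun (incidenceMatrix_transpose_mulVec s t i) w
  rw [hflow.1, if_neg w.2, sub_zero] at this
  exact this.trans (by simp [Pi.single_apply, Subtype.ext_iff])

theorem stmt2_general {V E : Type} [Fintype V] [Fintype E] [DecidableEq V]
    (s t : E → V) (hconn : MConnected s t) (e₀ : E) (a b : V)
    (he₀ : (s e₀ = a ∧ t e₀ = b) ∨ (s e₀ = b ∧ t e₀ = a))
    (v : V → ℝ) (i : E → ℝ) (hflow : IsUnitFlow s t a b v i) :
    v a - v b =
      (Nat.card {T : Finset E // IsSpanningTree s t T ∧ e₀ ∈ T} : ℝ) /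
        (Nat.card {T : Finset E // IsSpanningTree s t T} : ℝ) := by
  classical
  rcases eq_or_ne a b with rfl | hab
  · have hloop : s e₀ = t e₀ := by rcases he₀ with h | h <;> rw [h.1, h.2]
    have : IsEmpty {T // IsSpanningTree s t T ∧ e₀ ∈ T} :=
      ⟨fun T => notMem_of_isSpanningTree_of_loop s t T.2.1 hloop T.2.2⟩
    simp
  · have hpos : (Nat.card {T // IsSpanningTree s t T} : ℝ) ≠ 0 := by
      obtain ⟨T, hT⟩ := exists_isSpanningTree s t hconn
      exact Nat.cast_ne_zero.2 (Nat.card_pos_iff.2 ⟨⟨⟨T, hT⟩⟩, inferInstance⟩).ne'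
    rw [eq_div_iff hpos, mul_comm, card_isSpanningTree_eq_det s t b,
      det_mul_apply_of_mulVec_eq_single (hflow.groundedLaplacian_mulVec hab),
      card_isSpanningTree_mem_eq_det s t hab he₀, groundedIncidence₂, transpose_submatrix,
      ← submatrix_mul _ _ _ _ _ Function.bijective_id]

/-- for any edge `e₀` between `a` and `b` in a finite connected multigraph
with unit resistors, the effective resistance `R_{ab}` equals the probability that `e₀`
lies in a uniformly random spanning tree, i.e. (# spanning trees containing `e₀`) /
(# spanning trees). -/
theorem stmt2 {V E : Type} [Fintype V] [Fintype E] [DecidableEq V] [DecidableEq E]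
    (s t : E → V) (hconn : MConnected s t) (e₀ : E) (a b : V)
    (he₀ : (s e₀ = a ∧ t e₀ = b) ∨ (s e₀ = b ∧ t e₀ = a))
    (v : V → ℝ) (i : E → ℝ) (hflow : IsUnitFlow s t a b v i) :
    v a - v b =
      (Nat.card {T : Finset E // IsSpanningTree s t T ∧ e₀ ∈ T} : ℝ) /
        (Nat.card {T : Finset E // IsSpanningTree s t T} : ℝ) :=
  stmt2_general s t hconn e₀ a b he₀ v i hflow
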